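/- arXiv:0704.2919 — 2 statements merged into one kernel-verified Lean document; each statement's English description precedes it below -/
import Mathlib

section
/- If B is the base of a ∪-closed family containing ∅, and K_0 = ∅, K_1, ..., K_n = K is a tight path in F, then for any L in B the sequence obtained from ∅ ∪ L = L, K_1 ∪ L, ..., K_n ∪ L = K ∪ L by removing consecutive duplicates is a tight path in F from L to K ∪ L. -/
open Finset

variable {α : Type*} [DecidableEq α]

/-- The span of a family `G`: all unions of nonempty subfamilies of `G`. -/
def Span (G : Finset (Finset α)) : Finset (Finset α) :=
  (G.powerset.filter Finset.Nonempty).image fun H => H.sup id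

/-- A family is ∪-closed if it contains the union of each of its nonempty subfamilies. -/
def UnionClosed (F : Finset (Finset α)) : Prop :=
  ∀ H ⊆ F, H.Nonempty → H.sup id ∈ F

/-- `p` is a tight path from `P` to `Q` inside the family `F`. -/
def IsTightPath (F : Finset (Finset α)) (P Q : Finset α) (p : List (Finset α)) : Prop :=
  p.head? = some P ∧ p.getLast? = some Q ∧
  p.length = (symmDiff P Q).card + 1 ∧
  (∀ S ∈ p, S ∈ F) ∧
  List.Chain' (fun A B => (symmDiff A B).card = 1) p

/-- A family is well-graded if any two distinct members are joined by a tight path. -/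
def WellGraded (F : Finset (Finset α)) : Prop :=
  ∀ P ∈ F, ∀ Q ∈ F, P ≠ Q → ∃ p, IsTightPath F P Q p

/-- `B` is a base of `F`: a minimal subfamily of `F` spanning `F`. -/
def IsBase (B F : Finset (Finset α)) : Prop :=
  B ⊆ F ∧ Span B = F ∧ ∀ H ⊆ B, Span H = F → H = B

/-- `A` is an atom of `F` at `x`: an inclusion-minimal member of `F` containing `x`. -/
def IsAtomAt (F : Finset (Finset α)) (x : α) (A : Finset α) : Prop :=
  A ∈ F ∧ x ∈ A ∧ ∀ B ∈ F, x ∈ B → B ⊆ A → B = A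

/-- `A` is an atom of `F`: either the empty set (if it is in `F`) or an atom at some point. -/
def IsAtomOf (F : Finset (Finset α)) (A : Finset α) : Prop :=
  (A = ∅ ∧ A ∈ F) ∨ ∃ x, IsAtomAt F x A

/-- The surmise function: the collection of atoms of `F` at `x`. -/
def surmise (F : Finset (Finset α)) (x : α) : Finset (Finset α) :=
  F.filter fun A => x ∈ A ∧ ∀ B ∈ F, x ∈ B → B ⊆ A → B = A

/-- `{σ(x) : x ∈ ∪F}` forms a partition of `B \ {∅}`. -/
def SurmisePartition (F B : Finset (Finset α)) : Prop :=
  (∀ x ∈ F.sup id, ∀ y ∈ F.sup id,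
      surmise F x = surmise F y ∨ Disjoint (surmise F x) (surmise F y)) ∧
  (F.sup id).sup (surmise F) = B.erase ∅

/-- The endpoints of `X` in the family `B`: elements of `X` lying in no proper
subset of `X` belonging to `B`. -/
def endpoints (B : Finset (Finset α)) (X : Finset α) : Finset α :=
  X \ (B.filter fun Y => Y ⊂ X).sup id

/-- A family is discriminative if points contained in the same members are equal. -/
def Discriminative (F : Finset (Finset α)) : Prop :=
  ∀ u ∈ F.sup id, ∀ v ∈ F.sup id, (∀ S ∈ F, (u ∈ S ↔ v ∈ S)) → u = v

/-! A tight path from `P ⊆ Q` to `Q` can only add elements, one of `Q \ P` at each step, since the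
distance to `Q` must drop by one at every step. Adding `x` to `S` leaves `S ∪ L` unchanged when
`x ∈ L` and otherwise adds `x ∉ S ∪ L`; so once duplicates are removed, each step again adds one
element of `(Q ∪ L) \ (S ∪ L)`, and the distance to `Q ∪ L` drops by one per step. -/

open scoped symmDiff

variable {F : Finset (Finset α)} {P Q A B L : Finset α}

theorem UnionClosed.union_mem (hF : UnionClosed F) (hA : A ∈ F) (hB : B ∈ F) : A ∪ B ∈ F := by
  simpa [sup_insert] using
    hF {A, B} (insert_subset hA (singleton_subset_iff.2 hB)) (insert_nonempty _ _)

theorem Finset.card_symmDiff_le_add (A B C : Finset α) : #(A ∆ C) ≤ #(A ∆ B) + #(B ∆ C) :=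
  (card_le_card (symmDiff_triangle A B C)).trans (card_union_le _ _)

theorem Finset.card_symmDiff_le_length_of_isChain {l : List (Finset α)}
    (hl : (P :: l).IsChain fun A B => #(A ∆ B) = 1) (hQ : (P :: l).getLast? = some Q) :
    #(P ∆ Q) ≤ l.length := by
  induction l generalizing P with
  | nil => simp_all
  | cons B l ih =>
    rw [List.isChain_cons_cons] at hl
    rw [List.getLast?_cons_cons] at hQ
    calc #(P ∆ Q) ≤ #(P ∆ B) + #(B ∆ Q) := card_symmDiff_le_add P B Q
      _ ≤ (B :: l).length := by rw [hl.1, List.length_cons, add_comm]; gcongr; exact ih hl.2 hQ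

theorem Finset.mem_symmDiff_of_card_symmDiff_lt {x : α} (hPB : P ∆ B = {x})
    (hlt : #(B ∆ Q) < #(P ∆ Q)) : x ∈ P ∆ Q := by
  by_contra hx
  refine hlt.not_ge (card_le_card fun y hy => ?_)
  have hyx : y ∉ P ∆ B := by rw [hPB, mem_singleton]; rintro rfl; exact hx hy
  simp only [mem_symmDiff] at hy hyx ⊢
  tauto

theorem Finset.eq_insert_of_card_symmDiff_lt (hPQ : P ⊆ Q) (hPB : #(P ∆ B) = 1)
    (hlt : #(B ∆ Q) < #(P ∆ Q)) : ∃ x ∈ Q \ P, B = insert x P := by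
  obtain ⟨x, hx⟩ := card_eq_one.1 hPB
  have hxQP : x ∈ Q \ P := by
    rw [← symmDiff_of_le hPQ]; exact mem_symmDiff_of_card_symmDiff_lt hx hlt
  refine ⟨x, hxQP, ?_⟩
  rw [← symmDiff_symmDiff_cancel_left P B, hx]
  ext y
  simp only [mem_symmDiff, mem_singleton, mem_insert]
  grind

theorem Finset.symmDiff_insert_self {x : α} (hx : x ∉ A) : A ∆ insert x A = {x} := by
  rw [symmDiff_of_le (subset_insert x A), insert_sdiff_of_notMem _ hx, Finset.sdiff_self,
    insert_empty]

theorem Finset.card_symmDiff_insert_add_one {x : α} (hxA : x ∉ A) (hQ : insert x A ⊆ Q) :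
    #(insert x A ∆ Q) + 1 = #(A ∆ Q) := by
  rw [symmDiff_of_le hQ, symmDiff_of_le ((subset_insert x A).trans hQ), sdiff_insert]
  exact card_erase_add_one (mem_sdiff.2 ⟨hQ (mem_insert_self x A), hxA⟩)

namespace IsTightPath

theorem singleton (hA : A ∈ F) : IsTightPath F A A [A] :=
  ⟨rfl, rfl, by simp, by simpa using hA, List.isChain_singleton _⟩

theorem start_mem {p : List (Finset α)} (h : IsTightPath F P Q p) : P ∈ F :=
  h.2.2.2.1 P (List.mem_of_head? h.1)

theorem eq_of_singleton (h : IsTightPath F P Q [A]) : A = P ∧ Q = P := by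
  obtain ⟨hP, hQ, -⟩ := h
  simp only [List.head?_cons, List.getLast?_singleton, Option.some.injEq] at hP hQ
  exact ⟨hP, hQ.symm.trans hP⟩

theorem cons {l : List (Finset α)} (h : IsTightPath F B Q l) (hP : P ∈ F)
    (hPB : #(P ∆ B) = 1) (hcard : #(B ∆ Q) + 1 = #(P ∆ Q)) : IsTightPath F P Q (P :: l) := by
  obtain ⟨hB, hQ, hlen, hF, hl⟩ := h
  cases l with
  | nil => simp at hB
  | cons B' l =>
    obtain rfl : B' = B := by simpa using hB
    refine ⟨rfl, by rwa [List.getLast?_cons_cons], by simp_all, ?_,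
      List.isChain_cons_cons.2 ⟨hPB, hl⟩⟩
    simpa [hP] using hF

theorem of_cons_cons {l : List (Finset α)} (h : IsTightPath F P Q (A :: B :: l)) :
    A = P ∧ #(P ∆ B) = 1 ∧ #(B ∆ Q) + 1 = #(P ∆ Q) ∧ IsTightPath F B Q (B :: l) := by
  obtain ⟨hP, hQ, hlen, hF, hl⟩ := h
  obtain rfl : P = A := by simpa using hP.symm
  rw [List.getLast?_cons_cons] at hQ
  rw [List.Chain', List.isChain_cons_cons] at hl
  have hlow := card_symmDiff_le_length_of_isChain hl.2 hQ
  have hup := card_symmDiff_le_add P B Q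
  simp only [List.length_cons] at hlen
  have hcard : #(B ∆ Q) + 1 = #(P ∆ Q) := by omega
  exact ⟨rfl, hl.1, hcard, rfl, hQ, by simp only [List.length_cons]; omega,
    fun S hS => hF S (List.mem_cons_of_mem _ hS), hl.2⟩

theorem destutter_map_union (hF : UnionClosed F) (hL : L ∈ F) {p : List (Finset α)}
    (hPQ : P ⊆ Q) (hp : IsTightPath F P Q p) :
    IsTightPath F (P ∪ L) (Q ∪ L) ((p.map (· ∪ L)).destutter (· ≠ ·)) := by
  induction p generalizing P with
  | nil => simp [IsTightPath] at hp
  | cons A p ih =>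
    rcases p with _ | ⟨B, l⟩
    · obtain ⟨rfl, rfl⟩ := hp.eq_of_singleton
      exact singleton (hF.union_mem hp.start_mem hL)
    · obtain ⟨rfl, hAB, hcard, htail⟩ := hp.of_cons_cons
      obtain ⟨x, hx, rfl⟩ := eq_insert_of_card_symmDiff_lt hPQ hAB (by omega)
      rw [mem_sdiff] at hx
      have ih := ih (insert_subset hx.1 hPQ) htail
      rw [List.map_cons, List.map_cons, List.destutter_cons_cons]
      by_cases hxL : x ∈ L
      · have hAL : A ∪ L = insert x A ∪ L := by rw [insert_union, insert_eq_of_mem (by simp [hxL])]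
        rwa [if_neg (not_not.2 hAL), hAL]
      · have hxAL : x ∉ A ∪ L := by simp [hx.2, hxL]
        rw [if_pos (by rw [insert_union]; exact ne_insert_of_notMem _ _ hxAL)]
        refine ih.cons (hF.union_mem hp.start_mem hL) ?_ ?_ <;> rw [insert_union]
        · rw [symmDiff_insert_self hxAL, card_singleton]
        · exact card_symmDiff_insert_add_one hxAL
            (insert_subset (mem_union_left _ hx.1) (union_subset_union_left hPQ))

end IsTightPath

theorem union_of_tight_path_general (F B : Finset (Finset α)) (hF : UnionClosed F)
    (hB : IsBase B F)
    (K L : Finset α) (hL : L ∈ B) (p : List (Finset α))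
    (hp : IsTightPath F ∅ K p) :
    IsTightPath F L (K ∪ L) ((p.map (· ∪ L)).destutter (· ≠ ·)) := by
  simpa using hp.destutter_map_union hF (hB.1 hL) (empty_subset K)

/-- Taking a tight path from `∅` to `K`, forming unions with `L ∈ B` and removing
consecutive duplicates yields a tight path from `L` to `K ∪ L`. -/
theorem union_of_tight_path (F B : Finset (Finset α)) (hF : UnionClosed F)
    (hB : IsBase B F) (hempty : (∅ : Finset α) ∈ B)
    (K L : Finset α) (hL : L ∈ B) (p : List (Finset α))
    (hp : IsTightPath F ∅ K p) :
    IsTightPath F L (K ∪ L) ((p.map (· ∪ L)).destutter (· ≠ ·)) :=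
  union_of_tight_path_general F B hF hB K L hL p hp
end

section
/- A family B of finite sets is the base of its span if and only if every set in B is either empty or has a nonempty set of endpoints. -/
open Finset

variable {α : Type*} [DecidableEq α]

/-! Since spans are closed under unions, a member `X` of `B` can be dropped without changing the
span exactly when it is a union of other members of `B`. Those other members are proper subsets
of `X`, so this happens iff `X` is nonempty and covered by the members of `B` strictly inside it,
i.e. iff `X ≠ ∅` has no endpoint. -/

section Span

variable {G H : Finset (Finset α)} {S : Finset α}

lemma mem_span : S ∈ Span G ↔ ∃ K ⊆ G, K.Nonempty ∧ K.sup id = S := by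
  simp only [Span, mem_image, mem_filter, mem_powerset, and_assoc]

lemma subset_span : G ⊆ Span G := fun X hX =>
  mem_span.2 ⟨{X}, singleton_subset_iff.2 hX, singleton_nonempty X, sup_singleton⟩

lemma span_mono (h : G ⊆ H) : Span G ⊆ Span H := fun _ hS =>
  let ⟨K, hK, hKne, hKS⟩ := mem_span.1 hS
  mem_span.2 ⟨K, hK.trans h, hKne, hKS⟩

lemma unionClosed_span (G : Finset (Finset α)) : UnionClosed (Span G) := by
  rintro H hH ⟨Y₀, hY₀⟩
  set K := G.filter fun Z => ∃ Y ∈ H, Z ⊆ Y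
  have hcover : ∀ Y ∈ H, ∃ L ⊆ K, L.Nonempty ∧ L.sup id = Y := by
    intro Y hY
    obtain ⟨L, hLG, hL, rfl⟩ := mem_span.1 (hH hY)
    exact ⟨L, fun Z hZ => mem_filter.2 ⟨hLG hZ, _, hY, le_sup (f := id) hZ⟩, hL, rfl⟩
  obtain ⟨L₀, hL₀K, hL₀, -⟩ := hcover Y₀ hY₀
  refine mem_span.2 ⟨K, filter_subset _ _, hL₀.mono hL₀K, le_antisymm ?_ ?_⟩
  · refine Finset.sup_le fun Z hZ => ?_
    obtain ⟨Y, hY, hZY⟩ := (mem_filter.1 hZ).2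
    exact hZY.trans (le_sup (f := id) hY)
  · refine Finset.sup_le fun Y hY => ?_
    obtain ⟨L, hLK, -, rfl⟩ := hcover Y hY
    exact sup_mono hLK

lemma span_subset_of_unionClosed {F : Finset (Finset α)} (hGF : G ⊆ F) (hF : UnionClosed F) :
    Span G ⊆ F := fun _ hS =>
  let ⟨K, hK, hKne, hKS⟩ := mem_span.1 hS
  hKS ▸ hF K (hK.trans hGF) hKne

lemma exists_mem_subset_of_mem_span {x : α} (hS : S ∈ Span G) (hx : x ∈ S) :
    ∃ Y ∈ G, Y ⊆ S ∧ x ∈ Y := by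
  obtain ⟨K, hK, -, rfl⟩ := mem_span.1 hS
  obtain ⟨Y, hY, hxY⟩ := mem_sup.1 hx
  exact ⟨Y, hK hY, le_sup (f := id) hY, hxY⟩

lemma empty_mem_of_empty_mem_span (h : ∅ ∈ Span G) : ∅ ∈ G := by
  obtain ⟨K, hK, ⟨Y, hY⟩, hKe⟩ := mem_span.1 h
  have hYe : Y = ∅ := subset_empty.1 (hKe ▸ le_sup (f := id) hY)
  exact hYe ▸ hK hY

lemma span_erase_eq_of_mem_span_erase {B : Finset (Finset α)} {X : Finset α}
    (hX : X ∈ Span (B.erase X)) : Span (B.erase X) = Span B := by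
  refine (span_mono (erase_subset X B)).antisymm
    (span_subset_of_unionClosed (fun Y hY => ?_) (unionClosed_span _))
  obtain rfl | hYX := eq_or_ne Y X
  · exact hX
  · exact subset_span (mem_erase.2 ⟨hYX, hY⟩)

end Span

lemma isBase_span_iff_forall_notMem_span_erase {B : Finset (Finset α)} :
    IsBase B (Span B) ↔ ∀ X ∈ B, X ∉ Span (B.erase X) := by
  constructor
  · rintro ⟨-, -, hmin⟩ X hXB hX
    have hB := hmin _ (erase_subset X B) (span_erase_eq_of_mem_span_erase hX)
    exact notMem_erase X B (hB.ge hXB)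
  · refine fun h => ⟨subset_span, rfl, fun H hHB hH => hHB.antisymm fun X hXB => ?_⟩
    by_contra hXH
    have hHX : H ⊆ B.erase X := fun Y hY => mem_erase.2 ⟨ne_of_mem_of_not_mem hY hXH, hHB hY⟩
    exact h X hXB (span_mono hHX (hH ▸ subset_span hXB))

section Endpoints

variable {B : Finset (Finset α)} {X : Finset α}

lemma sup_ssubsets_subset : (B.filter (· ⊂ X)).sup id ⊆ X :=
  Finset.sup_le fun _ hY => (mem_filter.1 hY).2.subset

lemma endpoints_eq_empty_iff : endpoints B X = ∅ ↔ (B.filter (· ⊂ X)).sup id = X :=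
  sdiff_eq_empty_iff_subset.trans ⟨sup_ssubsets_subset.antisymm, Eq.ge⟩

lemma mem_span_erase_of_endpoints_eq_empty (hX : X.Nonempty) (h : endpoints B X = ∅) :
    X ∈ Span (B.erase X) := by
  have hsup := endpoints_eq_empty_iff.1 h
  refine mem_span.2 ⟨B.filter (· ⊂ X), fun Y hY => ?_, ?_, hsup⟩
  · obtain ⟨hYB, hYX⟩ := mem_filter.1 hY
    exact mem_erase.2 ⟨hYX.ne, hYB⟩
  · obtain ⟨x, hx⟩ := hX
    obtain ⟨Y, hY, -⟩ := mem_sup.1 (hsup.symm ▸ hx)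
    exact ⟨Y, hY⟩

lemma notMem_span_erase_of_mem_endpoints {x : α} (hx : x ∈ endpoints B X) :
    X ∉ Span (B.erase X) := by
  intro hX
  obtain ⟨hxX, hxn⟩ := mem_sdiff.1 hx
  obtain ⟨Y, hY, hYX, hxY⟩ := exists_mem_subset_of_mem_span hX hxX
  obtain ⟨hYne, hYB⟩ := mem_erase.1 hY
  exact hxn (mem_sup.2 ⟨Y, mem_filter.2 ⟨hYB, hYX.ssubset_of_ne hYne⟩, hxY⟩)

lemma notMem_span_erase_iff :
    X ∉ Span (B.erase X) ↔ X = ∅ ∨ (endpoints B X).Nonempty := by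
  constructor
  · intro hX
    by_contra! h
    exact hX (mem_span_erase_of_endpoints_eq_empty h.1 h.2)
  · rintro (rfl | ⟨x, hx⟩)
    · exact fun h => notMem_erase ∅ B (empty_mem_of_empty_mem_span h)
    · exact notMem_span_erase_of_mem_endpoints hx

end Endpoints

/-- A family is the base of its span iff every member is empty or has an endpoint. -/
theorem isBase_span_iff_endpoints (B : Finset (Finset α)) :
    IsBase B (Span B) ↔ ∀ X ∈ B, X = ∅ ∨ (endpoints B X).Nonempty := by
  simp only [isBase_span_iff_forall_notMem_span_erase, notMem_span_erase_iff]
end
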